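/- arXiv:1908.11696 — 2 statements merged into one kernel-verified Lean document; each statement's English description precedes it below -/
import Mathlib

section
/- Let n ≥ 2 be an integer, s ∈ (0,1), and let A ∈ L²(ℝ^{2n}, ℂⁿ) belong to 𝒜₀. Define σ(x,y) = 1 + (√2/𝒞_{n,s}^{1/2}) |y−x|^{n/2+s} (A_{a∥}(x,y)·(y−x)/|y−x|) for x ≠ y. Then: (i) σ(x,y) = σ(y,x) a.e.; (ii) σ ≥ 1 a.e.; (iii) A_{a∥}(x,y) = α(x,y)(σ(x,y)−1) for a.e. (x,y); (iv) σ is locally integrable and defines a distribution on ℝ^{2n}: for every φ ∈ C_c^∞(ℝ^{2n}) supported in B_{r₁}×B_{r₂} (balls centered at the origin), |∫∫ σφ dx dy| ≤ k‖φ‖_{L^∞}(1 + ‖A‖²_{L²(ℝ^{2n})}) for a constant k depending only on n, s, r₁, r₂. -/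
/- Common framework for the formalization of
   "An inverse problem for the fractional Schrödinger equation in a magnetic field"
   (G. Covi). -/

open MeasureTheory Real Complex
open scoped ENNReal NNReal BigOperators Classical

noncomputable section

/-- Points of `ℝⁿ`. -/
abbrev Rn (n : ℕ) := EuclideanSpace ℝ (Fin n)

/-- Vectors of `ℂⁿ`. -/
abbrev Cn (n : ℕ) := EuclideanSpace ℂ (Fin n)

/-- Embedding of a real vector into `ℂⁿ`. -/
def toC {n : ℕ} (x : Rn n) : Cn n := WithLp.toLp 2 (fun i => (x i : ℂ))

/-- Bilinear dot product of a complex vector with a real vector. -/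
def cdotR {n : ℕ} (v : Cn n) (w : Rn n) : ℂ := ∑ i, v i * (w i : ℂ)

/-- Bilinear (non-hermitian) dot product of two complex vectors. -/
def cdot {n : ℕ} (v w : Cn n) : ℂ := ∑ i, v i * w i

/-- Symmetric part `A_s(x,y) = (A(x,y) + A(y,x))/2`. -/
def symPart {n : ℕ} (A : Rn n × Rn n → Cn n) : Rn n × Rn n → Cn n :=
  fun p => ((2 : ℂ)⁻¹) • (A p + A (p.2, p.1))

/-- Antisymmetric part `A_a = A - A_s`. -/
def antiPart {n : ℕ} (A : Rn n × Rn n → Cn n) : Rn n × Rn n → Cn n :=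
  fun p => A p - symPart A p

/-- Parallel part `A_∥(x,y) = (A(x,y)·(x-y)/|x-y|²)(x-y)` for `x ≠ y`, `A` on the diagonal. -/
def parPart {n : ℕ} (A : Rn n × Rn n → Cn n) : Rn n × Rn n → Cn n :=
  fun p => if p.1 = p.2 then A p
    else ((cdotR (A p) (p.1 - p.2)) / ((‖p.1 - p.2‖ : ℂ) ^ 2)) • toC (p.1 - p.2)

/-- Perpendicular part `A_⊥ = A - A_∥`. -/
def perpPart {n : ℕ} (A : Rn n × Rn n → Cn n) : Rn n × Rn n → Cn n :=
  fun p => A p - parPart A p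

/-- `𝒥₁A(x) = (∫ |A(y,x)|² dy)^{1/2}`. -/
def J1 {n : ℕ} (A : Rn n × Rn n → Cn n) (x : Rn n) : ℝ :=
  Real.sqrt (∫ y : Rn n, ‖A (y, x)‖ ^ 2)

/-- `𝒥₂A(x) = (∫ |A(x,y)|² dy)^{1/2}`. -/
def J2 {n : ℕ} (A : Rn n × Rn n → Cn n) (x : Rn n) : ℝ :=
  Real.sqrt (∫ y : Rn n, ‖A (x, y)‖ ^ 2)

/-- The normalizing constant `𝒞_{n,s}` of the fractional Laplacian `(-Δ)^s`. -/
def Cns (n : ℕ) (s : ℝ) : ℝ :=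
  (4 : ℝ) ^ s * Real.Gamma ((n : ℝ) / 2 + s) / (Real.pi ^ ((n : ℝ) / 2) * |Real.Gamma (-s)|)

/-- `α(x,y) = (𝒞_{n,s}^{1/2}/√2) (y-x)/|y-x|^{n/2+s+1}` (as a complex vector). -/
def alphaK {n : ℕ} (s : ℝ) (p : Rn n × Rn n) : Cn n :=
  ((((Real.sqrt (Cns n s) / Real.sqrt 2) * ‖p.2 - p.1‖ ^ (-((n : ℝ) / 2 + s + 1))) : ℝ) : ℂ) •
    toC (p.2 - p.1)

/-- The fractional gradient `∇ˢu(x,y) = (u(x) - u(y)) α(x,y)`. -/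
def gradS {n : ℕ} (s : ℝ) (u : Rn n → ℂ) (p : Rn n × Rn n) : Cn n :=
  (u p.1 - u p.2) • alphaK s p

/-- The magnetic fractional gradient `∇ˢ_A u(x,y) = ∇ˢu(x,y) + A(x,y) u(x)`. -/
def gradA {n : ℕ} (s : ℝ) (A : Rn n × Rn n → Cn n) (u : Rn n → ℂ) (p : Rn n × Rn n) : Cn n :=
  gradS s u p + u p.1 • A p

/-- Gagliardo `H^s(ℝⁿ)` norm squared (equivalent to the Bessel-potential norm for `s ∈ (0,1)`). -/
def gagNormSq {n : ℕ} (s : ℝ) (u : Rn n → ℂ) : ℝ≥0∞ :=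
  (∫⁻ x : Rn n, (‖u x‖₊ : ℝ≥0∞) ^ 2) +
    ∫⁻ p : Rn n × Rn n, (‖u p.1 - u p.2‖₊ : ℝ≥0∞) ^ 2 / (edist p.1 p.2) ^ ((n : ℝ) + 2 * s)

/-- Membership in `H^s(ℝⁿ)`, `s ∈ (0,1)`. -/
def MemHs {n : ℕ} (s : ℝ) (u : Rn n → ℂ) : Prop :=
  AEStronglyMeasurable u volume ∧ gagNormSq s u < ⊤

/-- The `H^s(ℝⁿ)` norm. -/
def HsNorm {n : ℕ} (s : ℝ) (u : Rn n → ℂ) : ℝ :=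
  Real.sqrt (gagNormSq s u).toReal

/-- `f ∈ C_c^∞(W)`. -/
def IsTestOn {n : ℕ} (W : Set (Rn n)) (f : Rn n → ℂ) : Prop :=
  ContDiff ℝ (⊤ : ℕ∞) f ∧ HasCompactSupport f ∧ tsupport f ⊆ W

/-- Membership in `H̃^s(Ω)`, the closure of `C_c^∞(Ω)` in `H^s(ℝⁿ)`. -/
def MemTildeHs {n : ℕ} (s : ℝ) (Ω : Set (Rn n)) (u : Rn n → ℂ) : Prop :=
  MemHs s u ∧ ∀ ε > (0 : ℝ), ∃ φ : Rn n → ℂ, IsTestOn Ω φ ∧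
    HsNorm s (fun x => u x - φ x) < ε

/-- Fourier transform on `ℝⁿ`, convention `ℱu(ξ) = ∫ e^{-ix·ξ} u(x) dx`. -/
def FT1 {n : ℕ} (u : Rn n → ℂ) (ξ : Rn n) : ℂ :=
  ∫ x : Rn n, Complex.exp (-(Complex.I * ((inner ℝ x ξ : ℝ) : ℂ))) * u x

/-- Fourier transform on `ℝ^{2n}` of a `ℂⁿ`-valued function. -/
def FT2v {n : ℕ} (F : Rn n × Rn n → Cn n) (ζ : Rn n × Rn n) : Cn n :=
  ∫ p : Rn n × Rn n,
    Complex.exp (-(Complex.I * (((inner ℝ p.1 ζ.1 : ℝ) + (inner ℝ p.2 ζ.2 : ℝ) : ℝ) : ℂ))) • F p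

/-- Membership in the Bessel-potential space `H^t(ℝ^{2n}, ℂⁿ)`, `t ≥ 0` (Fourier side). -/
def MemH2Fourier {n : ℕ} (t : ℝ) (F : Rn n × Rn n → Cn n) : Prop :=
  MemLp F 2 volume ∧
    (∫⁻ ζ : Rn n × Rn n,
      ENNReal.ofReal ((1 + ‖ζ.1‖ ^ 2 + ‖ζ.2‖ ^ 2) ^ t * ‖FT2v F ζ‖ ^ 2)) < ⊤

/-- The exponent `p = max{2, n/(2s)}`. -/
def pexp (n : ℕ) (s : ℝ) : ℝ := max 2 ((n : ℝ) / (2 * s))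

/-- The class `𝒜₀` of vector potentials: properties (p1), (p2), (p3). -/
def MemA0 {n : ℕ} (s : ℝ) (A : Rn n × Rn n → Cn n) : Prop :=
  (MemLp (J1 A) (ENNReal.ofReal (2 * pexp n s)) volume ∧
    MemLp (J2 A) (ENNReal.ofReal (2 * pexp n s)) volume) ∧
  MemH2Fourier (s * pexp n s - s) (parPart (symPart A)) ∧
  (∀ x y : Rn n, ∃ r : ℝ, 0 ≤ r ∧ cdotR (parPart (antiPart A) (x, y)) (y - x) = (r : ℂ))

/-- The class `𝒫₀` of pairs of potentials: properties (p1)–(p4). -/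
def MemP0 {n : ℕ} (s : ℝ) (Ω : Set (Rn n)) (A : Rn n × Rn n → Cn n) (q : Rn n → ℝ) : Prop :=
  MemA0 s A ∧ MemLp q (ENNReal.ofReal (pexp n s)) (volume.restrict Ω)

/-- The class `𝒫` of pairs of potentials: properties (p1)–(p5). -/
def MemP {n : ℕ} (s : ℝ) (Ω : Set (Rn n)) (A : Rn n × Rn n → Cn n) (q : Rn n → ℝ) : Prop :=
  MemP0 s Ω A q ∧ MemLp A 2 volume ∧ ∀ p : Rn n × Rn n, p ∉ Ω ×ˢ Ω → A p = 0

/-- The bilinear form `B^s_{A,q}[u,v] = ∫∫ ∇ˢ_A u · ∇ˢ_A v dy dx + ∫ q u v dx`. -/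
def Bform {n : ℕ} (s : ℝ) (A : Rn n × Rn n → Cn n) (q : Rn n → ℝ) (u v : Rn n → ℂ) : ℂ :=
  (∫ p : Rn n × Rn n, cdot (gradA s A u p) (gradA s A v p)) +
    ∫ x : Rn n, (q x : ℂ) * u x * v x

/-- The gauge `(A,q) ∼ (A',q')`: `(-Δ)^s_A u + qu = (-Δ)^s_{A'} u + q'u` in `H^{-s}(ℝⁿ)`
for every `u ∈ H^s(ℝⁿ)` (tested against all `v ∈ H^s(ℝⁿ)`). -/
def GaugeSim {n : ℕ} (s : ℝ) (A A' : Rn n × Rn n → Cn n) (q q' : Rn n → ℝ) : Prop :=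
  ∀ u v : Rn n → ℂ, MemHs s u → MemHs s v → Bform s A q u v = Bform s A' q' u v

/-- Pairing of `Q = q + ∫|A|²dy + (∇·)ˢ A_{s∥}` against `w`. -/
def Qpair {n : ℕ} (s : ℝ) (A : Rn n × Rn n → Cn n) (q : Rn n → ℝ) (w : Rn n → ℂ) : ℂ :=
  (∫ x : Rn n, ((q x : ℂ) + (J2 A x : ℂ) ^ 2) * w x) +
    ∫ p : Rn n × Rn n, cdot (parPart (symPart A) p) (gradS s w p)

/-- `σ(x,y) = 1 + (√2/𝒞_{n,s}^{1/2}) |y-x|^{n/2+s} (A_{a∥}(x,y)·(y-x)/|y-x|)`. -/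
def sigmaOf {n : ℕ} (s : ℝ) (A : Rn n × Rn n → Cn n) (p : Rn n × Rn n) : ℝ :=
  1 + (Real.sqrt 2 / Real.sqrt (Cns n s)) * ‖p.2 - p.1‖ ^ ((n : ℝ) / 2 + s) *
    (cdotR (parPart (antiPart A) p) ((‖p.2 - p.1‖)⁻¹ • (p.2 - p.1))).re

/-- A solution operator for the exterior-value problem for FMSE (existence + a.e. uniqueness). -/
def SolOp {n : ℕ} (s : ℝ) (Ω : Set (Rn n)) (A : Rn n × Rn n → Cn n) (q : Rn n → ℝ)
    (sol : (Rn n → ℂ) → Rn n → ℂ) : Prop :=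
  ∀ f, MemHs s f →
    (MemHs s (sol f) ∧ MemTildeHs s Ω (fun x => sol f x - f x) ∧
      ∀ v, MemTildeHs s Ω v → Bform s A q (sol f) v = 0) ∧
    ∀ u, MemHs s u → MemTildeHs s Ω (fun x => u x - f x) →
      (∀ v, MemTildeHs s Ω v → Bform s A q u v = 0) → u =ᵐ[volume] sol f

end
section statement8aux
open MeasureTheory Real Complex

variable {n : ℕ}

lemma cdotR_zero_right (v : Cn n) : cdotR v (0 : Rn n) = 0 := by simp [cdotR]

lemma cdotR_neg_right (v : Cn n) (w : Rn n) : cdotR v (-w) = -cdotR v w := by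
  simp [cdotR, Finset.sum_neg_distrib]

lemma cdotR_smul_right (v : Cn n) (t : ℝ) (w : Rn n) :
    cdotR v (t • w) = (t : ℂ) * cdotR v w := by
  simp only [cdotR, PiLp.smul_apply, smul_eq_mul, Finset.mul_sum]
  push_cast
  exact Finset.sum_congr rfl fun i _ => by ring

lemma cdotR_smul_left (c : ℂ) (v : Cn n) (w : Rn n) :
    cdotR (c • v) w = c * cdotR v w := by
  simp only [cdotR, PiLp.smul_apply, smul_eq_mul, Finset.mul_sum, mul_assoc]

lemma cdotR_toC_self (w : Rn n) : cdotR (toC w) w = ((‖w‖ ^ 2 : ℝ) : ℂ) := by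
  have h : (∑ i, w i * w i) = ‖w‖ ^ 2 := by
    rw [EuclideanSpace.norm_eq, Real.sq_sqrt (Finset.sum_nonneg fun i _ => by positivity)]
    exact Finset.sum_congr rfl fun i _ => by rw [Real.norm_eq_abs, sq_abs, sq]
  rw [← h]
  simp [cdotR, toC]

lemma norm_cdotR_le (v : Cn n) (w : Rn n) : ‖cdotR v w‖ ≤ ‖v‖ * ‖w‖ := by
  set u : Cn n := WithLp.toLp 2 (fun i => (starRingEnd ℂ) (v i)) with hu
  have h1 : cdotR v w = inner ℂ u (toC w) := by
    simp [cdotR, PiLp.inner_apply, RCLike.inner_apply, hu, toC]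
    exact Finset.sum_congr rfl fun i _ => mul_comm _ _
  have h2 : ‖u‖ = ‖v‖ := by
    rw [EuclideanSpace.norm_eq, EuclideanSpace.norm_eq]; simp [hu]
  have h3 : ‖toC w‖ = ‖w‖ := by
    rw [EuclideanSpace.norm_eq, EuclideanSpace.norm_eq]; simp [toC]
  rw [h1, ← h2, ← h3]
  exact norm_inner_le_norm u (toC w)

lemma toC_neg (w : Rn n) : toC (-w) = -toC w := by ext i; simp [toC]

lemma antiPart_eq (A : Rn n × Rn n → Cn n) (p : Rn n × Rn n) :
    antiPart A p = (2 : ℂ)⁻¹ • (A p - A (p.2, p.1)) := by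
  simp only [antiPart, symPart]
  module

lemma antiPart_diag (A : Rn n × Rn n → Cn n) (x : Rn n) :
    antiPart A (x, x) = 0 := by
  rw [antiPart_eq]; simp

lemma antiPart_swap (A : Rn n × Rn n → Cn n) (x y : Rn n) :
    antiPart A (y, x) = -antiPart A (x, y) := by
  rw [antiPart_eq, antiPart_eq]; simp; module

lemma norm_antiPart_le (A : Rn n × Rn n → Cn n) (p : Rn n × Rn n) :
    ‖antiPart A p‖ ≤ ‖A p‖ + ‖A (p.2, p.1)‖ := by
  rw [antiPart_eq, norm_smul]
  have := norm_sub_le (A p) (A (p.2, p.1))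
  simp only [norm_inv, Complex.norm_ofNat]  -- ‖(2:ℂ)⁻¹‖ = 1/2
  nlinarith [norm_nonneg (A p), norm_nonneg (A (p.2, p.1)), norm_nonneg (A p - A (p.2, p.1))]

lemma cdotR_parPart (F : Rn n × Rn n → Cn n) {x y : Rn n} (h : x ≠ y) :
    cdotR (parPart F (x, y)) (y - x) = cdotR (F (x, y)) (y - x) := by
  have hxy : x - y ≠ 0 := sub_ne_zero.2 h
  have ht : (‖x - y‖ : ℝ) ≠ 0 := norm_ne_zero_iff.2 hxy
  rw [parPart, if_neg (by simpa using h)]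
  simp only
  rw [cdotR_smul_left]
  have h1 : (y : Rn n) - x = -(x - y) := by abel
  rw [h1, cdotR_neg_right, cdotR_neg_right, cdotR_toC_self]
  have h2 : ((‖x - y‖ ^ 2 : ℝ) : ℂ) = ((‖x - y‖ : ℝ) : ℂ) ^ 2 := by push_cast; ring
  have hc : ((‖x - y‖ : ℝ) : ℂ) ≠ 0 := by exact_mod_cast ht
  field_simp
  rw [h2]

end statement8aux

section statement8aux2
open MeasureTheory Real Complex

variable {n : ℕ} {s : ℝ}

lemma cdotR_neg_left (v : Cn n) (w : Rn n) : cdotR (-v) w = -cdotR v w := by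
  simp [cdotR, Finset.sum_neg_distrib]

lemma Cns_pos (hn : 2 ≤ n) (hs : s ∈ Set.Ioo (0 : ℝ) 1) : 0 < Cns n s := by
  have h1 := hs.1
  have h2 := hs.2
  have hn2 : (2 : ℝ) ≤ (n : ℝ) := by exact_mod_cast hn
  unfold Cns
  apply div_pos
  · exact mul_pos (Real.rpow_pos_of_pos (by norm_num) s)
      (Real.Gamma_pos_of_pos (by nlinarith))
  · refine mul_pos (Real.rpow_pos_of_pos Real.pi_pos _) (abs_pos.2 (Real.Gamma_ne_zero ?_))
    intro m hm
    rcases m with _ | m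
    · simp at hm; linarith
    · have : (1 : ℝ) ≤ ((m + 1 : ℕ) : ℝ) := by exact_mod_cast Nat.succ_le_succ (Nat.zero_le m)
      have hsm : s = ((m + 1 : ℕ) : ℝ) := by
        have := neg_injective hm
        linarith [this]
      linarith

lemma sigma_eq (hn : 2 ≤ n) (hs : s ∈ Set.Ioo (0 : ℝ) 1) (A : Rn n × Rn n → Cn n)
    (p : Rn n × Rn n) :
    sigmaOf s A p = 1 + Real.sqrt 2 / Real.sqrt (Cns n s) *
      ‖p.2 - p.1‖ ^ ((n : ℝ) / 2 + s - 1) * (cdotR (antiPart A p) (p.2 - p.1)).re := by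
  have hn2 : (2 : ℝ) ≤ (n : ℝ) := by exact_mod_cast hn
  obtain ⟨x, y⟩ := p
  by_cases hxy : x = y
  · subst hxy
    simp only [sigmaOf, sub_self, norm_zero]
    rw [Real.zero_rpow (by nlinarith [hs.1] : (n : ℝ) / 2 + s ≠ 0),
      Real.zero_rpow (by nlinarith [hs.1] : (n : ℝ) / 2 + s - 1 ≠ 0)]
    ring
  · have hd : y - x ≠ 0 := sub_ne_zero.2 (Ne.symm hxy)
    have ht : 0 < ‖y - x‖ := norm_pos_iff.2 hd
    rw [sigmaOf]
    simp only
    rw [cdotR_smul_right, cdotR_parPart (antiPart A) hxy]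
    have hre : ((((‖y - x‖)⁻¹ : ℝ) : ℂ) * cdotR (antiPart A (x, y)) (y - x)).re
        = (‖y - x‖)⁻¹ * (cdotR (antiPart A (x, y)) (y - x)).re := by
      simp [Complex.mul_re]
    rw [hre]
    have hpow : ‖y - x‖ ^ ((n : ℝ) / 2 + s - 1) = ‖y - x‖ ^ ((n : ℝ) / 2 + s) * (‖y - x‖)⁻¹ := by
      rw [Real.rpow_sub ht, Real.rpow_one, div_eq_mul_inv]
    rw [hpow]
    ring

lemma sigma_swap (hn : 2 ≤ n) (hs : s ∈ Set.Ioo (0 : ℝ) 1) (A : Rn n × Rn n → Cn n)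
    (p : Rn n × Rn n) : sigmaOf s A p = sigmaOf s A (p.2, p.1) := by
  obtain ⟨x, y⟩ := p
  rw [sigma_eq hn hs, sigma_eq hn hs]
  simp only
  rw [antiPart_swap A x y, show x - y = -(y - x) by abel, cdotR_neg_left, cdotR_neg_right,
    neg_neg, norm_neg]

lemma sigma_ge_one (hn : 2 ≤ n) (hs : s ∈ Set.Ioo (0 : ℝ) 1) (A : Rn n × Rn n → Cn n)
    (hA0 : MemA0 s A) (p : Rn n × Rn n) : 1 ≤ sigmaOf s A p := by
  obtain ⟨x, y⟩ := p
  rw [sigma_eq hn hs]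
  simp only
  by_cases hxy : x = y
  · subst hxy; simp [cdotR_zero_right]
  · obtain ⟨r, hr0, hr⟩ := hA0.2.2 x y
    have hcd : cdotR (antiPart A (x, y)) (y - x) = (r : ℂ) := by
      rw [← cdotR_parPart (antiPart A) hxy]; exact hr
    rw [hcd, Complex.ofReal_re]
    have : 0 ≤ Real.sqrt 2 / Real.sqrt (Cns n s) * ‖y - x‖ ^ ((n : ℝ) / 2 + s - 1) * r := by
      apply mul_nonneg (mul_nonneg (div_nonneg (Real.sqrt_nonneg _) (Real.sqrt_nonneg _))
        (Real.rpow_nonneg (norm_nonneg _) _)) hr0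
    linarith

lemma parPart_antiPart_eq (hn : 2 ≤ n) (hs : s ∈ Set.Ioo (0 : ℝ) 1) (A : Rn n × Rn n → Cn n)
    (hA0 : MemA0 s A) (p : Rn n × Rn n) :
    parPart (antiPart A) p = ((sigmaOf s A p - 1 : ℝ) : ℂ) • alphaK s p := by
  obtain ⟨x, y⟩ := p
  by_cases hxy : x = y
  · subst hxy
    rw [parPart, if_pos rfl, antiPart_diag]
    have hσ : sigmaOf s A (x, x) = 1 := by
      rw [sigma_eq hn hs]; simp [cdotR_zero_right]
    rw [hσ]
    simp
  · have hd : y - x ≠ 0 := sub_ne_zero.2 (Ne.symm hxy)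
    have ht : 0 < ‖y - x‖ := norm_pos_iff.2 hd
    obtain ⟨r, hr0, hr⟩ := hA0.2.2 x y
    have hcd : cdotR (antiPart A (x, y)) (y - x) = (r : ℂ) := by
      rw [← cdotR_parPart (antiPart A) hxy]; exact hr
    have hσ : sigmaOf s A (x, y) - 1
        = Real.sqrt 2 / Real.sqrt (Cns n s) * ‖y - x‖ ^ ((n : ℝ) / 2 + s - 1) * r := by
      rw [sigma_eq hn hs]
      simp only [hcd, Complex.ofReal_re]
      ring
    have hC := Cns_pos hn hs
    have hCs : 0 < Real.sqrt (Cns n s) := Real.sqrt_pos.2 hC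
    have h2s : 0 < Real.sqrt 2 := by positivity
    have h4 : ‖y - x‖ ^ ((n : ℝ) / 2 + s - 1) * ‖y - x‖ ^ (-((n : ℝ) / 2 + s + 1))
        = (‖y - x‖ ^ 2)⁻¹ := by
      rw [← Real.rpow_add ht, show (n : ℝ) / 2 + s - 1 + -((n : ℝ) / 2 + s + 1) = -2 by ring,
        Real.rpow_neg ht.le, show ((2 : ℝ) = ((2 : ℕ) : ℝ)) by norm_num, Real.rpow_natCast]
    have hone : Real.sqrt 2 / Real.sqrt (Cns n s) * (Real.sqrt (Cns n s) / Real.sqrt 2) = 1 := by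
      field_simp
    have hreal : (sigmaOf s A (x, y) - 1) *
        (Real.sqrt (Cns n s) / Real.sqrt 2 * ‖y - x‖ ^ (-((n : ℝ) / 2 + s + 1)))
        = r / ‖y - x‖ ^ 2 := by
      rw [hσ, show Real.sqrt 2 / Real.sqrt (Cns n s) * ‖y - x‖ ^ ((n : ℝ) / 2 + s - 1) * r *
          (Real.sqrt (Cns n s) / Real.sqrt 2 * ‖y - x‖ ^ (-((n : ℝ) / 2 + s + 1)))
          = Real.sqrt 2 / Real.sqrt (Cns n s) * (Real.sqrt (Cns n s) / Real.sqrt 2) *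
            (‖y - x‖ ^ ((n : ℝ) / 2 + s - 1) * ‖y - x‖ ^ (-((n : ℝ) / 2 + s + 1))) * r from by
          ring, hone, h4]
      ring
    have hcd2 : cdotR (antiPart A (x, y)) (x - y) = -(r : ℂ) := by
      rw [show x - y = -(y - x) by abel, cdotR_neg_right, hcd]
    rw [parPart, if_neg (by simpa using hxy)]
    simp only
    rw [hcd2, show x - y = -(y - x) by abel, toC_neg, norm_neg]
    rw [alphaK]
    simp only
    rw [smul_smul, ← Complex.ofReal_mul, smul_neg, neg_div, neg_smul, neg_neg]
    congr 1
    rw [hreal]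
    push_cast
    ring

end statement8aux2

section statement8aux3
open MeasureTheory Real Complex

variable {n : ℕ} {s : ℝ}

lemma swap_mp : MeasurePreserving (Prod.swap : Rn n × Rn n → Rn n × Rn n)
    volume volume :=
  MeasureTheory.Measure.measurePreserving_swap (μ := (volume : Measure (Rn n))) (ν := volume)

lemma aesm_swap {A : Rn n × Rn n → Cn n} (hA : AEStronglyMeasurable A volume) :
    AEStronglyMeasurable (fun p : Rn n × Rn n => A (p.2, p.1)) volume :=
  hA.comp_measurePreserving swap_mp

lemma aesm_antiPart {A : Rn n × Rn n → Cn n} (hA : AEStronglyMeasurable A volume) :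
    AEStronglyMeasurable (antiPart A) volume := by
  have h1 : antiPart A = fun p => (2 : ℂ)⁻¹ • (A p - A (p.2, p.1)) := funext (antiPart_eq A)
  rw [h1]
  exact (hA.sub (aesm_swap hA)).const_smul ((2 : ℂ)⁻¹)

lemma aesm_sigma (hn : 2 ≤ n) (hs : s ∈ Set.Ioo (0 : ℝ) 1) {A : Rn n × Rn n → Cn n}
    (hA : AEStronglyMeasurable A volume) :
    AEStronglyMeasurable (sigmaOf s A) volume := by
  have hn2 : (2 : ℝ) ≤ (n : ℝ) := by exact_mod_cast hn
  have h1 : sigmaOf s A = fun p => 1 + Real.sqrt 2 / Real.sqrt (Cns n s) *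
      ‖p.2 - p.1‖ ^ ((n : ℝ) / 2 + s - 1) * (cdotR (antiPart A p) (p.2 - p.1)).re :=
    funext (sigma_eq hn hs A)
  rw [h1]
  have hAa := aesm_antiPart hA
  have hcd : AEStronglyMeasurable
      (fun p : Rn n × Rn n => cdotR (antiPart A p) (p.2 - p.1)) volume := by
    have h2 : (fun p : Rn n × Rn n => cdotR (antiPart A p) (p.2 - p.1))
        = fun p => ∑ i, (antiPart A p i) * (((p.2 - p.1) i : ℝ) : ℂ) := rfl
    rw [h2]
    apply Finset.aestronglyMeasurable_fun_sum
    intro i _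
    apply AEStronglyMeasurable.mul
    · exact (EuclideanSpace.proj (𝕜 := ℂ) i).continuous.comp_aestronglyMeasurable hAa
    · apply Continuous.aestronglyMeasurable
      exact Complex.continuous_ofReal.comp
        ((EuclideanSpace.proj (𝕜 := ℝ) i).continuous.comp
          (continuous_snd.sub continuous_fst))
  have hrp : Continuous (fun p : Rn n × Rn n => ‖p.2 - p.1‖ ^ ((n : ℝ) / 2 + s - 1)) :=
    (Real.continuous_rpow_const (by nlinarith [hs.1])).comp
      ((continuous_snd.sub continuous_fst).norm)
  exact aestronglyMeasurable_const.add
    ((hrp.aestronglyMeasurable.const_mul _).mul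
      (Complex.continuous_re.comp_aestronglyMeasurable hcd))

lemma sigma_le_bound (hn : 2 ≤ n) (hs : s ∈ Set.Ioo (0 : ℝ) 1) (A : Rn n × Rn n → Cn n)
    {R : ℝ} (hR : 0 ≤ R) {p : Rn n × Rn n} (hp : ‖p.2 - p.1‖ ≤ R) :
    sigmaOf s A p ≤ 1 + Real.sqrt 2 / Real.sqrt (Cns n s) * R ^ ((n : ℝ) / 2 + s) *
      (‖A p‖ + ‖A (p.2, p.1)‖) := by
  have hn2 : (2 : ℝ) ≤ (n : ℝ) := by exact_mod_cast hn
  set c := Real.sqrt 2 / Real.sqrt (Cns n s) with hc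
  have hc0 : 0 ≤ c := div_nonneg (Real.sqrt_nonneg _) (Real.sqrt_nonneg _)
  set t := ‖p.2 - p.1‖ with htdef
  have ht0 : 0 ≤ t := norm_nonneg _
  rw [sigma_eq hn hs]
  have h1 : (cdotR (antiPart A p) (p.2 - p.1)).re ≤ ‖antiPart A p‖ * t := by
    calc (cdotR (antiPart A p) (p.2 - p.1)).re
        ≤ ‖cdotR (antiPart A p) (p.2 - p.1)‖ := by
          exact Complex.re_le_norm _
      _ ≤ ‖antiPart A p‖ * t := norm_cdotR_le _ _
  have hte : t ^ ((n : ℝ) / 2 + s - 1) * t = t ^ ((n : ℝ) / 2 + s) := by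
    rcases eq_or_lt_of_le ht0 with h | h
    · rw [← h, Real.zero_rpow (by nlinarith [hs.1]), Real.zero_rpow (by nlinarith [hs.1])]
      ring
    · nth_rewrite 2 [← Real.rpow_one t]
      rw [← Real.rpow_add h]
      norm_num
  have htR : t ^ ((n : ℝ) / 2 + s) ≤ R ^ ((n : ℝ) / 2 + s) :=
    Real.rpow_le_rpow ht0 hp (by nlinarith [hs.1])
  have hAa := norm_antiPart_le A p
  have key : c * t ^ ((n : ℝ) / 2 + s - 1) * (cdotR (antiPart A p) (p.2 - p.1)).re
      ≤ c * R ^ ((n : ℝ) / 2 + s) * (‖A p‖ + ‖A (p.2, p.1)‖) := by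
    calc c * t ^ ((n : ℝ) / 2 + s - 1) * (cdotR (antiPart A p) (p.2 - p.1)).re
        ≤ c * t ^ ((n : ℝ) / 2 + s - 1) * (‖antiPart A p‖ * t) := by
          apply mul_le_mul_of_nonneg_left h1
          exact mul_nonneg hc0 (Real.rpow_nonneg ht0 _)
      _ = c * (t ^ ((n : ℝ) / 2 + s - 1) * t) * ‖antiPart A p‖ := by ring
      _ = c * t ^ ((n : ℝ) / 2 + s) * ‖antiPart A p‖ := by rw [hte]
      _ ≤ c * R ^ ((n : ℝ) / 2 + s) * (‖A p‖ + ‖A (p.2, p.1)‖) := by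
          apply mul_le_mul (mul_le_mul_of_nonneg_left htR hc0) hAa (norm_nonneg _)
          exact mul_nonneg hc0 (Real.rpow_nonneg (le_trans ht0 hp) _)
  linarith

lemma sigma_intOn (hn : 2 ≤ n) (hs : s ∈ Set.Ioo (0 : ℝ) 1) {A : Rn n × Rn n → Cn n}
    (hA : MemLp A 2 volume) (hA0 : MemA0 s A)
    {S : Set (Rn n × Rn n)} (hSm : MeasurableSet S) (hSfin : volume S < ⊤)
    {R : ℝ} (hR : 0 ≤ R) (hSR : ∀ p ∈ S, ‖p.2 - p.1‖ ≤ R) :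
    IntegrableOn (sigmaOf s A) S volume ∧
    ∫ p in S, sigmaOf s A p ≤ (volume S).toReal *
        (1 + 2 * (Real.sqrt 2 / Real.sqrt (Cns n s) * R ^ ((n : ℝ) / 2 + s)))
      + 2 * (Real.sqrt 2 / Real.sqrt (Cns n s) * R ^ ((n : ℝ) / 2 + s)) *
        ∫ p : Rn n × Rn n, ‖A p‖ ^ 2 := by
  set c := Real.sqrt 2 / Real.sqrt (Cns n s) with hc
  have hc0 : 0 ≤ c := div_nonneg (Real.sqrt_nonneg _) (Real.sqrt_nonneg _)
  set C := c * R ^ ((n : ℝ) / 2 + s) with hC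
  have hC0 : 0 ≤ C := mul_nonneg hc0 (Real.rpow_nonneg hR _)
  haveI : IsFiniteMeasure (volume.restrict S) :=
    ⟨by rwa [Measure.restrict_apply_univ]⟩
  have hAswap : MemLp (fun p : Rn n × Rn n => A (p.2, p.1)) 2 volume :=
    hA.comp_measurePreserving swap_mp
  have hAn : IntegrableOn (fun p => ‖A p‖) S volume :=
    ((hA.restrict S).integrable one_le_two).norm
  have hAsn : IntegrableOn (fun p : Rn n × Rn n => ‖A (p.2, p.1)‖) S volume :=
    ((hAswap.restrict S).integrable one_le_two).norm
  have hconst : IntegrableOn (fun _ : Rn n × Rn n => (1 : ℝ)) S volume :=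
    integrableOn_const hSfin.ne
  have hAns : IntegrableOn (fun p : Rn n × Rn n => ‖A p‖ + ‖A (p.2, p.1)‖) S volume :=
    hAn.add hAsn
  have hg2 : IntegrableOn (fun p : Rn n × Rn n => C * (‖A p‖ + ‖A (p.2, p.1)‖)) S volume :=
    hAns.const_mul C
  have hh : IntegrableOn
      (fun p : Rn n × Rn n => 1 + C * (‖A p‖ + ‖A (p.2, p.1)‖)) S volume :=
    hconst.add hg2
  have hbd : ∀ p ∈ S, sigmaOf s A p ≤ 1 + C * (‖A p‖ + ‖A (p.2, p.1)‖) := fun p hp =>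
    sigma_le_bound hn hs A hR (hSR p hp)
  have hint : IntegrableOn (sigmaOf s A) S volume := by
    apply Integrable.mono' hh ((aesm_sigma hn hs hA.1).restrict)
    refine (ae_restrict_iff' hSm).2 (Filter.Eventually.of_forall fun p hp => ?_)
    rw [Real.norm_eq_abs, _root_.abs_of_nonneg (by linarith [sigma_ge_one hn hs A hA0 p])]
    exact hbd p hp
  refine ⟨hint, ?_⟩
  have h2 : ∫ p in S, sigmaOf s A p ≤
      ∫ p in S, (1 + C * (‖A p‖ + ‖A (p.2, p.1)‖)) :=
    setIntegral_mono_on hint hh hSm hbd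
  have hI2 : Integrable (fun p : Rn n × Rn n => ‖A p‖ ^ 2) volume := hA.norm.integrable_sq
  have hI2s : Integrable (fun p : Rn n × Rn n => ‖A (p.2, p.1)‖ ^ 2) volume :=
    hAswap.norm.integrable_sq
  have hIswap : ∫ p : Rn n × Rn n, ‖A (p.2, p.1)‖ ^ 2 = ∫ p : Rn n × Rn n, ‖A p‖ ^ 2 :=
    swap_mp.integral_comp
      (MeasurableEquiv.prodComm : (Rn n × Rn n) ≃ᵐ (Rn n × Rn n)).measurableEmbedding
      (fun q => ‖A q‖ ^ 2)
  have hInn : (0 : ℝ) ≤ ∫ p : Rn n × Rn n, ‖A p‖ ^ 2 :=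
    integral_nonneg fun p => by positivity
  set V := (volume S).toReal with hV
  have hV0 : 0 ≤ V := ENNReal.toReal_nonneg
  have hb1 : ∫ p in S, ‖A p‖ ≤ V + ∫ p : Rn n × Rn n, ‖A p‖ ^ 2 := by
    have ha : ∫ p in S, ‖A p‖ ≤ ∫ p in S, (1 + ‖A p‖ ^ 2) := by
      apply setIntegral_mono_on hAn (hconst.add hI2.integrableOn) hSm
      intro p _
      simp only [Pi.add_apply]
      nlinarith [norm_nonneg (A p)]
    have hb : ∫ p in S, (1 + ‖A p‖ ^ 2) = V + ∫ p in S, ‖A p‖ ^ 2 := by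
      rw [integral_add hconst hI2.integrableOn, setIntegral_const]
      simp [hV, Measure.real]
    have hcmp : ∫ p in S, ‖A p‖ ^ 2 ≤ ∫ p : Rn n × Rn n, ‖A p‖ ^ 2 :=
      setIntegral_le_integral hI2 (Filter.Eventually.of_forall fun p => by positivity)
    linarith
  have hb2 : ∫ p in S, ‖A (p.2, p.1)‖ ≤ V + ∫ p : Rn n × Rn n, ‖A p‖ ^ 2 := by
    have ha : ∫ p in S, ‖A (p.2, p.1)‖ ≤ ∫ p in S, (1 + ‖A (p.2, p.1)‖ ^ 2) := by
      apply setIntegral_mono_on hAsn (hconst.add hI2s.integrableOn) hSm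
      intro p _
      simp only [Pi.add_apply]
      nlinarith [norm_nonneg (A (p.2, p.1))]
    have hb : ∫ p in S, (1 + ‖A (p.2, p.1)‖ ^ 2) = V + ∫ p in S, ‖A (p.2, p.1)‖ ^ 2 := by
      rw [integral_add hconst hI2s.integrableOn, setIntegral_const]
      simp [hV, Measure.real]
    have hcmp : ∫ p in S, ‖A (p.2, p.1)‖ ^ 2 ≤ ∫ p : Rn n × Rn n, ‖A (p.2, p.1)‖ ^ 2 :=
      setIntegral_le_integral hI2s (Filter.Eventually.of_forall fun p => by positivity)
    linarith [hIswap ▸ hcmp]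
  have h3 : ∫ p in S, (1 + C * (‖A p‖ + ‖A (p.2, p.1)‖))
      = V + C * ((∫ p in S, ‖A p‖) + ∫ p in S, ‖A (p.2, p.1)‖) := by
    rw [integral_add hconst hg2, setIntegral_const, MeasureTheory.integral_const_mul,
      integral_add hAn hAsn]
    simp [hV, Measure.real]
  have hintAn : (0:ℝ) ≤ 0 := le_refl 0
  nlinarith [h2, h3.le, h3.ge, hb1, hb2, hC0, hInn, hV0]

end statement8aux3

/-- for `A ∈ L²(ℝ^{2n}) ∩ 𝒜₀` the function
`σ(x,y) = 1 + (√2/𝒞_{n,s}^{1/2})|y-x|^{n/2+s}(A_{a∥}(x,y)·(y-x)/|y-x|)` is a.e. symmetric,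
`σ ≥ 1` a.e., `A_{a∥} = α(σ-1)` a.e., and `σ` is locally integrable and defines a distribution:
for every `φ ∈ C_c^∞(ℝ^{2n})` supported in `B_{r₁} × B_{r₂}`,
`|∫∫ σφ| ≤ k ‖φ‖_{L^∞} (1 + ‖A‖²_{L²})` with `k = k(n,s,r₁,r₂)`. -/
theorem statement8 (n : ℕ) (hn : 2 ≤ n) (s : ℝ) (hs : s ∈ Set.Ioo (0 : ℝ) 1) :
    (∀ A : Rn n × Rn n → Cn n, MeasureTheory.MemLp A 2 MeasureTheory.volume → MemA0 s A →
      (∀ᵐ p : Rn n × Rn n ∂MeasureTheory.volume, sigmaOf s A p = sigmaOf s A (p.2, p.1)) ∧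
      (∀ᵐ p : Rn n × Rn n ∂MeasureTheory.volume, 1 ≤ sigmaOf s A p) ∧
      (∀ᵐ p : Rn n × Rn n ∂MeasureTheory.volume,
        parPart (antiPart A) p = ((sigmaOf s A p - 1 : ℝ) : ℂ) • alphaK s p) ∧
      MeasureTheory.LocallyIntegrable (sigmaOf s A) MeasureTheory.volume) ∧
    (∀ r₁ r₂ : ℝ, 0 < r₁ → 0 < r₂ → ∃ k > (0 : ℝ),
      ∀ A : Rn n × Rn n → Cn n, MeasureTheory.MemLp A 2 MeasureTheory.volume → MemA0 s A →
      ∀ φ : Rn n × Rn n → ℝ, ContDiff ℝ (⊤ : ℕ∞) φ →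
        tsupport φ ⊆ (Metric.ball (0 : Rn n) r₁) ×ˢ (Metric.ball (0 : Rn n) r₂) →
        |∫ p : Rn n × Rn n, sigmaOf s A p * φ p| ≤
          k * (⨆ p : Rn n × Rn n, |φ p|) * (1 + ∫ p : Rn n × Rn n, ‖A p‖ ^ 2)) := by
  constructor
  · intro A hA hA0
    refine ⟨Filter.Eventually.of_forall (fun p => sigma_swap hn hs A p),
      Filter.Eventually.of_forall (sigma_ge_one hn hs A hA0),
      Filter.Eventually.of_forall (parPart_antiPart_eq hn hs A hA0), ?_⟩
    rw [MeasureTheory.locallyIntegrable_iff]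
    intro K hK
    obtain ⟨r, hr⟩ := hK.isBounded.subset_closedBall (0 : Rn n × Rn n)
    have hr0 : (0 : ℝ) ≤ max r 0 := le_max_right r 0
    refine (sigma_intOn hn hs hA hA0 hK.measurableSet hK.measure_lt_top
      (R := 2 * max r 0) (by linarith) ?_).1
    intro p hp
    have h1 : ‖p‖ ≤ r := by
      have := hr hp
      simpa [Metric.mem_closedBall, dist_zero_right] using this
    have h2 := le_max_left r 0
    calc ‖p.2 - p.1‖ ≤ ‖p.2‖ + ‖p.1‖ := norm_sub_le _ _
      _ ≤ ‖p‖ + ‖p‖ := add_le_add (norm_snd_le p) (norm_fst_le p)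
      _ ≤ 2 * max r 0 := by linarith
  · intro r₁ r₂ hr₁ hr₂
    set S := (Metric.ball (0 : Rn n) r₁) ×ˢ (Metric.ball (0 : Rn n) r₂) with hSdef
    have hSm : MeasurableSet S := measurableSet_ball.prod measurableSet_ball
    have hSfin : volume S < ⊤ := by
      have h1 : volume S = volume (Metric.ball (0 : Rn n) r₁) *
          volume (Metric.ball (0 : Rn n) r₂) := by
        rw [hSdef]
        exact MeasureTheory.Measure.prod_prod _ _
      rw [h1]
      exact ENNReal.mul_lt_top measure_ball_lt_top measure_ball_lt_top
    set c := Real.sqrt 2 / Real.sqrt (Cns n s) with hcdef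
    have hc0 : 0 ≤ c := div_nonneg (Real.sqrt_nonneg _) (Real.sqrt_nonneg _)
    set C := c * (r₁ + r₂) ^ ((n : ℝ) / 2 + s) with hCdef
    have hC0 : 0 ≤ C := mul_nonneg hc0 (Real.rpow_nonneg (by linarith) _)
    set V := (volume S).toReal with hVdef
    have hV0 : 0 ≤ V := ENNReal.toReal_nonneg
    refine ⟨(1 + 2 * C) * (1 + V), by positivity, ?_⟩
    intro A hA hA0 φ hφ hφsupp
    have hRS : ∀ p ∈ S, ‖p.2 - p.1‖ ≤ r₁ + r₂ := by
      rintro ⟨x, y⟩ hp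
      obtain ⟨h1, h2⟩ := hp
      rw [Metric.mem_ball, dist_zero_right] at h1 h2
      calc ‖(x, y).2 - (x, y).1‖ ≤ ‖y‖ + ‖x‖ := norm_sub_le _ _
        _ ≤ r₁ + r₂ := by linarith
    obtain ⟨hint, hbound⟩ := sigma_intOn hn hs hA hA0 hSm hSfin
      (R := r₁ + r₂) (by linarith) hRS
    have hcs : HasCompactSupport φ := by
      apply Metric.isCompact_of_isClosed_isBounded (isClosed_tsupport φ)
      exact ((Metric.isBounded_ball.prod Metric.isBounded_ball).subset hφsupp)
    have hbdd : BddAbove (Set.range fun p : Rn n × Rn n => |φ p|) :=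
      hφ.continuous.abs.bddAbove_range_of_hasCompactSupport hcs.abs
    set M := ⨆ p : Rn n × Rn n, |φ p| with hMdef
    have hMle : ∀ p, |φ p| ≤ M := fun p => le_ciSup hbdd p
    have hM0 : 0 ≤ M := le_trans (abs_nonneg _) (hMle 0)
    have hσ1 := sigma_ge_one hn hs A hA0
    have hzero : ∀ p ∉ S, sigmaOf s A p * φ p = 0 := by
      intro p hp
      rw [image_eq_zero_of_notMem_tsupport (fun h => hp (hφsupp h)), mul_zero]
    rw [← MeasureTheory.setIntegral_eq_integral_of_forall_compl_eq_zero hzero]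
    have haesm : MeasureTheory.AEStronglyMeasurable (fun p => sigmaOf s A p * φ p)
        (volume.restrict S) :=
      ((aesm_sigma hn hs hA.1).restrict).mul (hφ.continuous.aestronglyMeasurable.restrict)
    have hintφ : MeasureTheory.IntegrableOn (fun p => sigmaOf s A p * φ p) S volume := by
      apply MeasureTheory.Integrable.mono' (hint.mul_const M) haesm
      refine Filter.Eventually.of_forall fun p => ?_
      rw [Real.norm_eq_abs, abs_mul, _root_.abs_of_nonneg (by linarith [hσ1 p] : (0:ℝ) ≤ sigmaOf s A p)]
      exact mul_le_mul_of_nonneg_left (hMle p) (by linarith [hσ1 p])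
    have hstep2 : |∫ p in S, sigmaOf s A p * φ p| ≤ ∫ p in S, sigmaOf s A p * M := by
      have h1 : |∫ p in S, sigmaOf s A p * φ p| ≤ ∫ p in S, |sigmaOf s A p| * |φ p| := by
        simpa [Real.norm_eq_abs] using
          MeasureTheory.norm_integral_le_integral_norm
            (μ := volume.restrict S) (fun p => sigmaOf s A p * φ p)
      have habs : MeasureTheory.IntegrableOn
          (fun p => |sigmaOf s A p| * |φ p|) S volume := by
        have := hintφ.norm
        simpa [Real.norm_eq_abs, abs_mul, IntegrableOn] using this
      have h2 : ∫ p in S, |sigmaOf s A p| * |φ p| ≤ ∫ p in S, sigmaOf s A p * M := by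
        apply MeasureTheory.setIntegral_mono_on habs (hint.mul_const M) hSm
        intro p _
        rw [_root_.abs_of_nonneg (by linarith [hσ1 p] : (0:ℝ) ≤ sigmaOf s A p)]
        exact mul_le_mul_of_nonneg_left (hMle p) (by linarith [hσ1 p])
      linarith
    have hmul : ∫ p in S, sigmaOf s A p * M = (∫ p in S, sigmaOf s A p) * M :=
      MeasureTheory.integral_mul_const M _
    set I := ∫ p : Rn n × Rn n, ‖A p‖ ^ 2 with hIdef
    have hI0 : 0 ≤ I := MeasureTheory.integral_nonneg fun p => by positivity
    have hkey : V * (1 + 2 * C) + 2 * C * I ≤ (1 + 2 * C) * (1 + V) * (1 + I) := by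
      nlinarith [mul_nonneg hC0 hI0, mul_nonneg hV0 hI0,
        mul_nonneg (mul_nonneg hC0 hV0) hI0]
    calc |∫ p in S, sigmaOf s A p * φ p|
        ≤ (∫ p in S, sigmaOf s A p) * M := by rw [hmul] at hstep2; exact hstep2
      _ ≤ (V * (1 + 2 * C) + 2 * C * I) * M :=
          mul_le_mul_of_nonneg_right hbound hM0
      _ ≤ ((1 + 2 * C) * (1 + V) * (1 + I)) * M :=
          mul_le_mul_of_nonneg_right hkey hM0
      _ = (1 + 2 * C) * (1 + V) * M * (1 + I) := by ring
end

section
/- Let n ≥ 2 be an integer, s ∈ (0,1), Ω ⊂ ℝⁿ a bounded open set with Lipschitz boundary, (A,q) ∈ 𝒫, and W ⊆ Ω_e a nonempty open set. Assume the weak unique continuation property for the fractional Laplacian: whenever w ∈ H^s(ℝⁿ) satisfies w = 0 a.e. on W and ⟨(−Δ)^s w, v⟩ = 0 for all v ∈ C_c^∞(W), then w ≡ 0 in ℝⁿ. If u ∈ H^s(ℝⁿ) satisfies u = 0 a.e. on W and B^s_{A,q}[u, v] = 0 for all v ∈ C_c^∞(W), then u ≡ 0 in ℝⁿ; in particular the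 fractional magnetic Schrödinger equation with potentials in 𝒫 enjoys the weak unique continuation property. -/
/- Common framework for the formalization of
   "An inverse problem for the fractional Schrödinger equation in a magnetic field"
   (G. Covi). -/

open MeasureTheory Real Complex
open scoped ENNReal NNReal BigOperators Classical

/-- for `(A,q) ∈ 𝒫`, the FMSE enjoys the weak unique continuation property,
assuming the WUCP of the fractional Laplacian: if `u ∈ H^s(ℝⁿ)` vanishes a.e. on `W ⊆ Ω_e`
and `B^s_{A,q}[u,v] = 0` for all `v ∈ C_c^∞(W)` (i.e. `(-Δ)ˢ_A u + qu = 0` in `W`),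
then `u ≡ 0`. -/
theorem statement18 (n : ℕ) (hn : 2 ≤ n) (s : ℝ) (hs : s ∈ Set.Ioo (0 : ℝ) 1)
    (Ω : Set (Rn n)) (hΩo : IsOpen Ω) (hΩb : Bornology.IsBounded Ω)
    (A : Rn n × Rn n → Cn n) (q : Rn n → ℝ) (hP : MemP s Ω A q)
    (W : Set (Rn n)) (hWo : IsOpen W) (hWne : W.Nonempty) (hW : W ⊆ (closure Ω)ᶜ)
    -- WUCP for the fractional Laplacian
    (hWUCPlap : ∀ w : Rn n → ℂ, MemHs s w →
      (∀ᵐ x ∂MeasureTheory.volume, x ∈ W → w x = 0) →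
      (∀ v, IsTestOn W v →
        (∫ p : Rn n × Rn n, cdot (gradS s w p) (gradS s v p)) = 0) →
      ∀ᵐ x ∂MeasureTheory.volume, w x = 0) :
    ∀ u : Rn n → ℂ, MemHs s u →
      (∀ᵐ x ∂MeasureTheory.volume, x ∈ W → u x = 0) →
      (∀ v, IsTestOn W v → Bform s A q u v = 0) →
      ∀ᵐ x ∂MeasureTheory.volume, u x = 0 := by
  intro u hu hu0 hB
  apply hWUCPlap u hu hu0
  intro v hv
  have hvz : ∀ x : Rn n, x ∈ Ω → v x = 0 := by
    intro x hx
    have hxW : x ∉ W := fun h => (hW h) (subset_closure hx)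
    exact image_eq_zero_of_notMem_tsupport (fun h => hxW (hv.2.2 h))
  have hBv := hB v hv
  simp only [Bform] at hBv
  -- pointwise equality of the gradient integrands
  have key : (fun p : Rn n × Rn n => cdot (gradA s A u p) (gradA s A v p))
      = fun p => cdot (gradS s u p) (gradS s v p) := by
    funext p
    by_cases hp : p ∈ Ω ×ˢ Ω
    · have hv1 : v p.1 = 0 := hvz p.1 hp.1
      have hv2 : v p.2 = 0 := hvz p.2 hp.2
      have hgv : gradS s v p = 0 := by simp [gradS, hv1, hv2]
      have hgAv : gradA s A v p = 0 := by simp [gradA, hgv, hv1]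
      simp [hgAv, hgv, cdot]
    · have hA : A p = 0 := hP.2.2 p hp
      simp [gradA, hA]
  -- the potential term vanishes a.e.
  have hq : (∫ x : Rn n, (q x : ℂ) * u x * v x) = 0 := by
    have hae : ∀ᵐ x ∂(volume : Measure (Rn n)), (q x : ℂ) * u x * v x = 0 := by
      filter_upwards [hu0] with x hx
      by_cases hxW : x ∈ W
      · simp [hx hxW]
      · have hvx : v x = 0 :=
          image_eq_zero_of_notMem_tsupport (fun h => hxW (hv.2.2 h))
        simp [hvx]
    exact integral_eq_zero_of_ae hae
  rw [key, hq, add_zero] at hBv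
  exact hBv
end
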